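/- arXiv:2311.06875 — 2 statements merged into one kernel-verified Lean document; each statement's English description precedes it below -/
import Mathlib

section
/- For every n ≥ 4, if G is obtained from the complete graph K_n by deleting at most ⌊n/2⌋ edges, then q*(G) = 0. -/
open Finset
open scoped Classical

noncomputable def vol {V : Type*} [Fintype V] (G : SimpleGraph V) (U : Finset V) : ℕ :=
  ∑ v ∈ U, G.degree v

noncomputable def numEdges {V : Type*} [Fintype V] (G : SimpleGraph V) : ℕ :=
  G.edgeFinset.card

noncomputable def edgesIn {V : Type*} [Fintype V] (G : SimpleGraph V) (U : Finset V) : ℕ :=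
  (G.edgeFinset.filter (fun e => ∀ v ∈ e, v ∈ U)).card

noncomputable def edgesBetween {V : Type*} [Fintype V] (G : SimpleGraph V) (A B : Finset V) : ℕ :=
  (G.edgeFinset.filter (fun e => ∃ a ∈ A, ∃ b ∈ B, e = s(a, b))).card

/-- modularity score of the bipartition `{A, Aᶜ}`. -/
noncomputable def bipScore {V : Type*} [Fintype V] (G : SimpleGraph V) (A : Finset V) : ℝ :=
  ((edgesIn G A : ℝ) + (edgesIn G Aᶜ : ℝ)) / (numEdges G : ℝ)
    - ((vol G A : ℝ) ^ 2 + (vol G Aᶜ : ℝ) ^ 2) / (4 * (numEdges G : ℝ) ^ 2)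

/-- modularity score of a vertex partition. -/
noncomputable def modScore {V : Type*} [Fintype V] (G : SimpleGraph V)
    (P : Finpartition (univ : Finset V)) : ℝ :=
  (∑ A ∈ P.parts, (edgesIn G A : ℝ)) / (numEdges G : ℝ)
    - (∑ A ∈ P.parts, (vol G A : ℝ) ^ 2) / (4 * (numEdges G : ℝ) ^ 2)

/-- the modularity `q*(G)`: the maximum modularity score over all vertex partitions. -/
noncomputable def modularity {V : Type*} [Fintype V] (G : SimpleGraph V) : ℝ :=
  ⨆ P : Finpartition (univ : Finset V), modScore G P

section Aux

variable {V : Type*} [Fintype V]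

lemma vol_eq_sum (H : SimpleGraph V) (A : Finset V) :
    vol H A = ∑ e ∈ H.edgeFinset, #(A.filter (· ∈ e)) := by
  classical
  unfold vol
  have hdeg : ∀ v : V, H.degree v = ∑ e ∈ H.edgeFinset, if v ∈ e then 1 else 0 := by
    intro v
    rw [← SimpleGraph.card_incidenceFinset_eq_degree, SimpleGraph.incidenceFinset_eq_filter,
      card_filter]
  simp_rw [hdeg, card_filter]
  exact Finset.sum_comm

lemma filter_mem_edge_card (A : Finset V) (e : Sym2 V) (he : ¬ e.IsDiag) :
    (if (∀ v ∈ e, v ∈ A) then 2 else 0) ≤ #(A.filter (· ∈ e)) ∧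
      #(A.filter (· ∈ e)) ≤ 1 + (if (∀ v ∈ e, v ∈ A) then 1 else 0) := by
  classical
  induction e using Sym2.ind with
  | _ x y =>
    rw [Sym2.mk_isDiag_iff] at he
    have hall : (∀ v ∈ s(x, y), v ∈ A) ↔ (x ∈ A ∧ y ∈ A) := by
      constructor
      · intro hv; exact ⟨hv x (by simp), hv y (by simp)⟩
      · rintro ⟨hx, hy⟩ v hv
        rcases Sym2.mem_iff.1 hv with rfl | rfl <;> assumption
    have hfe : A.filter (· ∈ s(x, y)) = A ∩ {x, y} := by
      ext v
      simp [Sym2.mem_iff]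
    rw [hfe]
    by_cases hx : x ∈ A <;> by_cases hy : y ∈ A
    · have h2 : A ∩ {x, y} = {x, y} := by
        rw [inter_eq_right]
        intro v hv
        rcases mem_insert.1 hv with rfl | hv
        · exact hx
        · rw [mem_singleton] at hv; subst hv; exact hy
      rw [h2, if_pos (hall.2 ⟨hx, hy⟩), if_pos (hall.2 ⟨hx, hy⟩), card_insert_of_notMem
        (by simpa using he), card_singleton]
      omega
    · have h1 : A ∩ {x, y} = {x} := by
        ext v; simp only [mem_inter, mem_insert, mem_singleton]
        constructor
        · rintro ⟨hv, rfl | rfl⟩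
          · rfl
          · exact absurd hv hy
        · rintro rfl; exact ⟨hx, Or.inl rfl⟩
      have hno : ¬ (∀ v ∈ s(x, y), v ∈ A) := fun hv => hy (hall.1 hv).2
      rw [h1, if_neg hno, if_neg hno, card_singleton]
      omega
    · have h1 : A ∩ {x, y} = {y} := by
        ext v; simp only [mem_inter, mem_insert, mem_singleton]
        constructor
        · rintro ⟨hv, rfl | rfl⟩
          · exact absurd hv hx
          · rfl
        · rintro rfl; exact ⟨hy, Or.inr rfl⟩
      have hno : ¬ (∀ v ∈ s(x, y), v ∈ A) := fun hv => hx (hall.1 hv).1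
      rw [h1, if_neg hno, if_neg hno, card_singleton]
      omega
    · have h0 : A ∩ {x, y} = ∅ := by
        ext v; simp only [mem_inter, mem_insert, mem_singleton, notMem_empty, iff_false]
        rintro ⟨hv, rfl | rfl⟩
        · exact hx hv
        · exact hy hv
      have hno : ¬ (∀ v ∈ s(x, y), v ∈ A) := fun hv => hx (hall.1 hv).1
      rw [h0, if_neg hno, if_neg hno, card_empty]
      omega

lemma two_edgesIn_le_vol (H : SimpleGraph V) (A : Finset V) :
    2 * edgesIn H A ≤ vol H A := by
  classical
  rw [vol_eq_sum]
  unfold edgesIn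
  rw [card_filter, mul_comm, Finset.sum_mul]
  apply Finset.sum_le_sum
  intro e he
  have hb := (filter_mem_edge_card A e
    (H.not_isDiag_of_mem_edgeSet (SimpleGraph.mem_edgeFinset.1 he))).1
  split_ifs at hb ⊢ <;> omega

lemma vol_le_numEdges_add (H : SimpleGraph V) (A : Finset V) :
    vol H A ≤ numEdges H + edgesIn H A := by
  classical
  rw [vol_eq_sum]
  unfold numEdges edgesIn
  rw [card_filter, card_eq_sum_ones H.edgeFinset, ← Finset.sum_add_distrib]
  apply Finset.sum_le_sum
  intro e he
  have hb := (filter_mem_edge_card A e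
    (H.not_isDiag_of_mem_edgeSet (SimpleGraph.mem_edgeFinset.1 he))).2
  split_ifs at hb ⊢ <;> omega


lemma edgeFinset_union_compl (G : SimpleGraph V) :
    G.edgeFinset ∪ Gᶜ.edgeFinset = (⊤ : SimpleGraph V).edgeFinset := by
  classical
  ext e
  induction e using Sym2.ind with
  | _ x y =>
    simp only [mem_union, SimpleGraph.mem_edgeFinset, SimpleGraph.mem_edgeSet,
      SimpleGraph.compl_adj, SimpleGraph.top_adj]
    constructor
    · rintro (h | h)
      · exact h.ne
      · exact h.1
    · intro hne
      by_cases hadj : G.Adj x y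
      · exact Or.inl hadj
      · exact Or.inr ⟨hne, hadj⟩

lemma disjoint_edgeFinset_compl (G : SimpleGraph V) :
    Disjoint G.edgeFinset Gᶜ.edgeFinset :=
  SimpleGraph.disjoint_edgeFinset.2 disjoint_compl_right

lemma top_filter_eq (A : Finset V) :
    (⊤ : SimpleGraph V).edgeFinset.filter (fun e => ∀ v ∈ e, v ∈ A)
      = A.offDiag.image (Function.uncurry Sym2.mk) := by
  classical
  ext e
  induction e using Sym2.ind with
  | _ x y =>
    simp only [mem_filter, SimpleGraph.mem_edgeFinset, SimpleGraph.mem_edgeSet,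
      SimpleGraph.top_adj, mem_image, mem_offDiag, Prod.exists, Function.uncurry_apply_pair, Sym2.eq_iff]
    constructor
    · rintro ⟨hxy, hall⟩
      exact ⟨x, y, ⟨hall x (by simp), hall y (by simp), hxy⟩, Or.inl ⟨rfl, rfl⟩⟩
    · rintro ⟨a, b, ⟨ha, hb, hab⟩, ⟨rfl, rfl⟩ | ⟨rfl, rfl⟩⟩
      · refine ⟨hab, ?_⟩
        intro v hv; rcases Sym2.mem_iff.1 hv with rfl | rfl <;> assumption
      · refine ⟨hab.symm, ?_⟩
        intro v hv; rcases Sym2.mem_iff.1 hv with rfl | rfl <;> assumption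

lemma edgesIn_add_compl (G : SimpleGraph V) (A : Finset V) :
    edgesIn G A + edgesIn Gᶜ A = (#A).choose 2 := by
  classical
  unfold edgesIn
  have hd : Disjoint (G.edgeFinset.filter (fun e => ∀ v ∈ e, v ∈ A))
      (Gᶜ.edgeFinset.filter (fun e => ∀ v ∈ e, v ∈ A)) :=
    disjoint_filter_filter (disjoint_edgeFinset_compl G)
  have h2 := Finset.card_union_of_disjoint hd
  rw [← filter_union, edgeFinset_union_compl, top_filter_eq, Sym2.card_image_offDiag] at h2
  convert h2.symm using 3
  ext e
  simp [SimpleGraph.mem_edgeFinset]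

lemma numEdges_add_compl (G : SimpleGraph V) :
    numEdges G + numEdges Gᶜ = (Fintype.card V).choose 2 := by
  classical
  unfold numEdges
  have h2 := Finset.card_union_of_disjoint (disjoint_edgeFinset_compl G)
  rw [edgeFinset_union_compl, SimpleGraph.card_edgeFinset_top_eq_card_choose_two] at h2
  convert h2.symm using 3
  ext e
  simp [SimpleGraph.mem_edgeFinset]

lemma deg_add_compl (G : SimpleGraph V) (v : V) [Fintype (G.neighborSet v)]
    [Fintype (Gᶜ.neighborSet v)] :
    G.degree v + Gᶜ.degree v = Fintype.card V - 1 := by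
  have h1 : G.degree v < Fintype.card V := by
    convert SimpleGraph.degree_lt_card_verts (G := G) v using 2
  have h2 : Gᶜ.degree v = Fintype.card V - 1 - G.degree v :=
    SimpleGraph.degree_compl (G := G) (v := v)
  omega

lemma vol_add_compl (G : SimpleGraph V) (A : Finset V) :
    vol G A + vol Gᶜ A = #A * (Fintype.card V - 1) := by
  classical
  unfold vol
  rw [← Finset.sum_add_distrib]
  trans ∑ _x ∈ A, (Fintype.card V - 1)
  · apply Finset.sum_congr rfl
    intro v _
    convert deg_add_compl G v using 2
    congr 1
    exact Subsingleton.elim _ _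
  · rw [Finset.sum_const, smul_eq_mul]

end Aux

lemma two_choose_two (a : ℕ) : 2 * a.choose 2 = a * (a - 1) := by
  cases a with
  | zero => simp
  | succ b =>
    rw [Nat.choose_two_right, Nat.succ_sub_one]
    have hdvd : 2 ∣ (b + 1) * b := by
      rw [mul_comm]
      exact (Nat.even_mul_succ_self b).two_dvd
    exact Nat.mul_div_cancel' hdvd

lemma key (n k a i c : ℤ) (hn : 4 ≤ n) (hk : 2*k ≤ n) (ha0 : 0 ≤ a) (ha : a ≤ n)
    (hi : 0 ≤ i) (hc : 0 ≤ c) (hic : i + c ≤ k) (hia : 2*i ≤ a*(a-1)) :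
    (n*(n-1)-2*k)*(a*(a-1)-2*i) ≤ (a*(n-1)-2*i-c)^2 := by
  rcases eq_or_lt_of_le ha0 with h0 | ha1
  · have h0' : a = 0 := h0.symm
    subst h0'
    have : i = 0 := by nlinarith
    subst this
    nlinarith [sq_nonneg c]
  · have hw0 : 0 ≤ a*(n-1) - i - k := by
      rcases eq_or_lt_of_le (show (1:ℤ) ≤ a by omega) with h1 | ha2
      · have : i = 0 := by nlinarith
        nlinarith
      · nlinarith
    have hvw : a*(n-1) - i - k ≤ a*(n-1)-2*i-c := by linarith
    have hsq : (a*(n-1)-i-k)^2 ≤ (a*(n-1)-2*i-c)^2 := by nlinarith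
    have hF : (n*(n-1)-2*k)*(a*(a-1)-2*i) ≤ (a*(n-1)-i-k)^2 := by
      rcases eq_or_lt_of_le hk with hke | hkl
      · rcases eq_or_lt_of_le hi with hi0 | hi1
        · nlinarith [sq_nonneg (n-2*a), sq_nonneg (i-k)]
        · have h2 : a*(n-a) ≤ 2*i*(n-1)*(n-a) := by
            have hna : (0:ℤ) ≤ n - a := by linarith
            have : (0:ℤ) ≤ (2*i*(n-1) - a) * (n-a) := by
              apply mul_nonneg _ hna
              nlinarith
            nlinarith
          nlinarith [sq_nonneg (i-k), h2]
      · nlinarith [sq_nonneg (i-k),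
          mul_nonneg (mul_nonneg hi (by linarith : (0:ℤ) ≤ n-1)) (by linarith : (0:ℤ) ≤ n-a),
          mul_nonneg (mul_nonneg ha0 (by linarith : (0:ℤ) ≤ n-a))
            (by linarith : (0:ℤ) ≤ n-2*k-1)]
    linarith

set_option maxHeartbeats 1000000 in
lemma main_subset (n : ℕ) (hn : 4 ≤ n) (G : SimpleGraph (Fin n))
    (h : Nat.choose n 2 - n / 2 ≤ numEdges G) (A : Finset (Fin n)) :
    4 * numEdges G * edgesIn G A ≤ (vol G A)^2 := by
  classical
  set m := numEdges G with hm
  set k := numEdges Gᶜ with hk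
  set a := #A with ha'
  set e := edgesIn G A with he'
  set i := edgesIn Gᶜ A with hi'
  set v := vol G A with hv'
  set l := vol Gᶜ A with hl'
  clear_value m k a e i v l
  have hcard : Fintype.card (Fin n) = n := Fintype.card_fin n
  have hmk : m + k = n.choose 2 := by
    rw [hm, hk]
    have := numEdges_add_compl G
    rwa [hcard] at this
  have hnn : 2*m + 2*k = n * (n - 1) := by
    rw [← two_choose_two, ← hmk]; ring
  have hei : e + i = a.choose 2 := by
    rw [he', hi', ha']
    exact edgesIn_add_compl G A
  have haa : 2*e + 2*i = a * (a - 1) := by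
    rw [← two_choose_two, ← hei]; ring
  have hvl : v + l = a * (n - 1) := by
    rw [hv', hl', ha']
    have := vol_add_compl G A
    rwa [hcard] at this
  have h2il : 2 * i ≤ l := by
    rw [hi', hl']
    exact two_edgesIn_le_vol Gᶜ A
  have hlk : l ≤ k + i := by
    rw [hl', hk, hi']
    exact vol_le_numEdges_add Gᶜ A
  have h2k : 2 * k ≤ n := by omega
  have ha : a ≤ n := by
    rw [ha']
    simpa [hcard] using Finset.card_le_univ A
  have h1n : 1 ≤ n := by omega
  -- cast everything to ℤ
  have h1 : ((n:ℤ))*((n:ℤ)-1) = 2*(m:ℤ) + 2*(k:ℤ) := by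
    have := congrArg (Nat.cast : ℕ → ℤ) hnn
    push_cast [Nat.cast_sub h1n] at this
    linarith
  have h2 : ((a:ℤ))*((a:ℤ)-1) = 2*(e:ℤ) + 2*(i:ℤ) := by
    rcases Nat.eq_zero_or_pos a with h0 | hpos
    · have he0 : 2*e + 2*i = 0 := by rw [haa, h0]
      have hez : e = 0 ∧ i = 0 := by omega
      rw [h0, hez.1, hez.2]
      norm_num
    · have := congrArg (Nat.cast : ℕ → ℤ) haa
      push_cast [Nat.cast_sub hpos] at this
      linarith
  have h3 : ((a:ℤ))*((n:ℤ)-1) = (v:ℤ) + (l:ℤ) := by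
    have := congrArg (Nat.cast : ℕ → ℤ) hvl
    push_cast [Nat.cast_sub h1n] at this
    linarith
  have hkey := key (n:ℤ) (k:ℤ) (a:ℤ) (i:ℤ) ((l:ℤ) - 2*(i:ℤ))
    (by exact_mod_cast hn) (by exact_mod_cast h2k)
    (by positivity) (by exact_mod_cast ha) (by positivity)
    (by have : (2*i:ℤ) ≤ (l:ℤ) := by exact_mod_cast h2il
        linarith)
    (by have : (l:ℤ) ≤ (k:ℤ) + (i:ℤ) := by exact_mod_cast hlk
        linarith)
    (by rw [h2]; have : (0:ℤ) ≤ (e:ℤ) := by positivity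
        linarith)
  rw [h1, h2, h3] at hkey
  have hfin : (4:ℤ) * (m:ℤ) * (e:ℤ) ≤ ((v:ℤ))^2 := by ring_nf at hkey ⊢; linarith [hkey]
  exact_mod_cast hfin


lemma numEdges_pos (n : ℕ) (hn : 4 ≤ n) (G : SimpleGraph (Fin n))
    (h : Nat.choose n 2 - n / 2 ≤ numEdges G) : 0 < numEdges G := by
  have h1 : n * 3 ≤ n * (n - 1) := Nat.mul_le_mul_left n (by omega)
  have h2 : 2 * n.choose 2 = n * (n - 1) := two_choose_two n
  omega

lemma score_nonpos (n : ℕ) (hn : 4 ≤ n) (G : SimpleGraph (Fin n))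
    (h : Nat.choose n 2 - n / 2 ≤ numEdges G) :
    ∀ P, modScore G P ≤ 0 := by
  letI : DecidableEq (Fin n) := fun a b => Classical.propDecidable (a = b)
  intro P
  have hm : 0 < numEdges G := numEdges_pos n hn G h
  have hmR : (0:ℝ) < (numEdges G : ℝ) := by exact_mod_cast hm
  unfold modScore
  rw [sub_nonpos, div_le_div_iff₀ hmR (by positivity)]
  have hpart : ∀ A ∈ P.parts, (4:ℝ) * (numEdges G : ℝ) * (edgesIn G A : ℝ) ≤ (vol G A : ℝ)^2 := by
    intro A _
    exact_mod_cast main_subset n hn G h A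
  have hsum : ∑ A ∈ P.parts, (4:ℝ) * (numEdges G : ℝ) * (edgesIn G A : ℝ)
      ≤ ∑ A ∈ P.parts, (vol G A : ℝ)^2 := Finset.sum_le_sum hpart
  have hfac : ∑ A ∈ P.parts, (4:ℝ) * (numEdges G : ℝ) * (edgesIn G A : ℝ)
      = (4:ℝ) * (numEdges G : ℝ) * ∑ A ∈ P.parts, (edgesIn G A : ℝ) := by
    rw [Finset.mul_sum]
  rw [hfac] at hsum
  calc (∑ A ∈ P.parts, (edgesIn G A : ℝ)) * (4 * (numEdges G : ℝ)^2)
      = (numEdges G : ℝ) * ((4:ℝ) * (numEdges G : ℝ) * ∑ A ∈ P.parts, (edgesIn G A : ℝ)) := by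
        ring
    _ ≤ (numEdges G : ℝ) * ∑ A ∈ P.parts, (vol G A : ℝ)^2 :=
        mul_le_mul_of_nonneg_left hsum hmR.le
    _ = (∑ A ∈ P.parts, (vol G A : ℝ)^2) * (numEdges G : ℝ) := by ring

theorem stmt3 (n : ℕ) (hn : 4 ≤ n) (G : SimpleGraph (Fin n))
    (h : Nat.choose n 2 - n / 2 ≤ numEdges G) :
    modularity G = 0 := by
  letI : DecidableEq (Fin n) := fun a b => Classical.propDecidable (a = b)
  have hm : 0 < numEdges G := numEdges_pos n hn G h
  have hmR : (0:ℝ) < (numEdges G : ℝ) := by exact_mod_cast hm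
  haveI : Nonempty (Fin n) := ⟨⟨0, by omega⟩⟩
  have hne : (univ : Finset (Fin n)) ≠ ⊥ := Finset.univ_nonempty.ne_empty
  have hEin : edgesIn G univ = numEdges G := by
    unfold edgesIn numEdges
    congr 1
    ext e
    simp
  have hvol : vol G univ = 2 * numEdges G := by
    unfold vol numEdges
    exact SimpleGraph.sum_degrees_eq_twice_card_edges G
  have hub : ∀ P, modScore G P ≤ 0 := score_nonpos n hn G h
  have h0 : modScore G (Finpartition.indiscrete hne) = 0 := by
    unfold modScore
    rw [show (Finpartition.indiscrete hne).parts = {univ} from rfl,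
      Finset.sum_singleton, Finset.sum_singleton, hEin, hvol]
    push_cast
    field_simp
    ring
  haveI : Nonempty (Finpartition (univ : Finset (Fin n))) := ⟨Finpartition.indiscrete hne⟩
  unfold modularity
  refine le_antisymm (ciSup_le hub) ?_
  rw [← h0]
  exact le_ciSup ⟨0, fun x hx => by obtain ⟨P, rfl⟩ := hx; exact hub P⟩
    (Finpartition.indiscrete hne)
end

section
/- Let 2 ≤ s ≤ t with s and t not coprime, say ℓ ≥ 2 divides both s and t. Let A consist of s/ℓ vertices of S and t/ℓ vertices of T in K_{s,t}, and let G⁻ be obtained from K_{s,t} by removing one edge between A and its complement. Then q_{(A, V∖A)}(G⁻) > 0; in particular δ⁻(K_{s,t}) = 1. -/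
open Finset
open scoped Classical

section Aux

variable {s t : ℕ}

abbrev Kst (s t : ℕ) := completeBipartiteGraph (Fin s) (Fin t)

lemma Kst_adj (u v : Fin s ⊕ Fin t) :
    (Kst s t).Adj u v ↔ (u.isLeft ∧ v.isRight) ∨ (u.isRight ∧ v.isLeft) := Iff.rfl

lemma emb_inj : Function.Injective (fun p : Fin s × Fin t => s(Sum.inl p.1, Sum.inr p.2)) := by
  rintro ⟨a, b⟩ ⟨c, d⟩ h
  simp [Sym2.eq_iff] at h
  simp [h.1, h.2]

lemma edgeFinset_Kst :
    (Kst s t).edgeFinset = (univ : Finset (Fin s × Fin t)).image (fun p => s(Sum.inl p.1, Sum.inr p.2)) := by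
  ext e
  induction e with
  | _ u v =>
    simp only [SimpleGraph.mem_edgeFinset, SimpleGraph.mem_edgeSet, mem_image, mem_univ, true_and]
    cases u <;> cases v <;> simp [Kst_adj, Sym2.eq_iff, eq_comm]

lemma card_filter_Kst (p : Sym2 (Fin s ⊕ Fin t) → Prop) [DecidablePred p] :
    ((Kst s t).edgeFinset.filter p).card
      = ((univ : Finset (Fin s × Fin t)).filter (fun q => p s(Sum.inl q.1, Sum.inr q.2))).card := by
  rw [edgeFinset_Kst, Finset.filter_image, card_image_of_injective _ emb_inj]

lemma numEdges_Kst : numEdges (Kst s t) = s * t := by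
  rw [numEdges, edgeFinset_Kst, card_image_of_injective _ emb_inj]
  simp

lemma card_left (A : Finset (Fin s ⊕ Fin t)) :
    ((univ : Finset (Fin s)).filter (fun i => (Sum.inl i : Fin s ⊕ Fin t) ∈ A)).card
      = (A.filter (fun v => v.isLeft)).card := by
  rw [← card_image_of_injective _ (Sum.inl_injective (α := Fin s) (β := Fin t))]
  congr 1
  ext v
  cases v <;> simp

lemma card_right (A : Finset (Fin s ⊕ Fin t)) :
    ((univ : Finset (Fin t)).filter (fun j => (Sum.inr j : Fin s ⊕ Fin t) ∈ A)).card
      = (A.filter (fun v => v.isRight)).card := by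
  rw [← card_image_of_injective _ (Sum.inr_injective (α := Fin s) (β := Fin t))]
  congr 1
  ext v
  cases v <;> simp

lemma edgesIn_Kst (A : Finset (Fin s ⊕ Fin t)) :
    edgesIn (Kst s t) A
      = (A.filter (fun v => v.isLeft)).card * (A.filter (fun v => v.isRight)).card := by
  rw [edgesIn, card_filter_Kst, ← card_left, ← card_right, ← card_product]
  congr 1
  ext q
  simp [Sym2.mem_iff, Finset.mem_product]

lemma degree_Kst_inl (i : Fin s) : (Kst s t).degree (Sum.inl i) = t := by
  rw [← SimpleGraph.card_neighborFinset_eq_degree]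
  have : (Kst s t).neighborFinset (Sum.inl i) = univ.image (Sum.inr : Fin t → Fin s ⊕ Fin t) := by
    ext w
    cases w <;> simp [SimpleGraph.mem_neighborFinset, Kst_adj]
  rw [this, card_image_of_injective _ Sum.inr_injective]
  simp

lemma degree_Kst_inr (j : Fin t) : (Kst s t).degree (Sum.inr j) = s := by
  rw [← SimpleGraph.card_neighborFinset_eq_degree]
  have : (Kst s t).neighborFinset (Sum.inr j) = univ.image (Sum.inl : Fin s → Fin s ⊕ Fin t) := by
    ext w
    cases w <;> simp [SimpleGraph.mem_neighborFinset, Kst_adj]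
  rw [this, card_image_of_injective _ Sum.inl_injective]
  simp

lemma vol_Kst (A : Finset (Fin s ⊕ Fin t)) :
    vol (Kst s t) A
      = (A.filter (fun v => v.isLeft)).card * t + (A.filter (fun v => v.isRight)).card * s := by
  rw [vol, ← Finset.sum_filter_add_sum_filter_not A (fun v => v.isLeft)]
  congr 1
  · rw [Finset.sum_congr rfl (fun v hv => ?_), Finset.sum_const, smul_eq_mul]
    obtain ⟨i, rfl⟩ := Sum.isLeft_iff.mp (mem_filter.mp hv).2
    exact degree_Kst_inl i
  · have : A.filter (fun v => ¬ v.isLeft) = A.filter (fun v => v.isRight) := by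
      apply filter_congr; intro v _; cases v <;> simp
    rw [this, Finset.sum_congr rfl (fun v hv => ?_), Finset.sum_const, smul_eq_mul]
    obtain ⟨j, rfl⟩ := Sum.isRight_iff.mp (mem_filter.mp hv).2
    exact degree_Kst_inr j

end Aux

section DelOne

variable {V : Type*} [Fintype V]

attribute [-instance] SimpleGraph.instDecidableRelAdjDeleteEdgesOfDecidablePredSym2MemSetOfDecidableEq

lemma edgeFinset_delOne [DecidableEq (Sym2 V)] (G : SimpleGraph V) (x y : V) :
    (G.deleteEdges {s(x, y)}).edgeFinset = G.edgeFinset.erase s(x, y) := by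
  ext e
  simp only [SimpleGraph.mem_edgeFinset, SimpleGraph.edgeSet_deleteEdges, Set.mem_diff,
    Set.mem_singleton_iff, mem_erase]
  tauto

lemma degree_delOne_same (G : SimpleGraph V) (x y : V) (v : V) (hvx : v ≠ x) (hvy : v ≠ y) :
    (G.deleteEdges {s(x, y)}).degree v = G.degree v := by
  rw [← SimpleGraph.card_neighborFinset_eq_degree, ← SimpleGraph.card_neighborFinset_eq_degree]
  congr 1
  ext w
  simp only [SimpleGraph.mem_neighborFinset, SimpleGraph.deleteEdges_adj, Set.mem_singleton_iff,
    Sym2.eq_iff]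
  tauto

lemma degree_delOne_x (G : SimpleGraph V) (x y : V) (h : G.Adj x y) :
    (G.deleteEdges {s(x, y)}).degree x = G.degree x - 1 := by
  rw [← SimpleGraph.card_neighborFinset_eq_degree, ← SimpleGraph.card_neighborFinset_eq_degree]
  have : (G.deleteEdges {s(x, y)}).neighborFinset x = (G.neighborFinset x).erase y := by
    ext w
    simp only [SimpleGraph.mem_neighborFinset, SimpleGraph.deleteEdges_adj, Set.mem_singleton_iff,
      Sym2.eq_iff, mem_erase]
    constructor
    · rintro ⟨ha, hne⟩
      exact ⟨fun hw => hne (by simp [hw]), ha⟩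
    · rintro ⟨hne, ha⟩
      refine ⟨ha, ?_⟩
      rintro (⟨-, rfl⟩ | ⟨rfl, rfl⟩)
      · exact hne rfl
      · exact G.loopless.irrefl _ ha
  rw [this, card_erase_of_mem (by simp [SimpleGraph.mem_neighborFinset, h])]

lemma vol_delOne (G : SimpleGraph V) (x y : V) (h : G.Adj x y) (A : Finset V)
    (hx : x ∈ A) (hy : y ∉ A) :
    vol (G.deleteEdges {s(x, y)}) A = vol G A - 1 := by
  rw [vol, vol, ← Finset.add_sum_erase _ _ hx, ← Finset.add_sum_erase _ _ hx,
    degree_delOne_x G x y h,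
    Finset.sum_congr rfl (fun v hv => degree_delOne_same G x y v (mem_erase.mp hv).1
      (fun hvy => hy (hvy ▸ (mem_erase.mp hv).2)))]
  have : 1 ≤ G.degree x := by
    rw [← SimpleGraph.card_neighborFinset_eq_degree]
    exact card_pos.mpr ⟨y, by simp [SimpleGraph.mem_neighborFinset, h]⟩
  omega

lemma edgesIn_delOne (G : SimpleGraph V) (x y : V) (A : Finset V) (hy : y ∉ A) :
    edgesIn (G.deleteEdges {s(x, y)}) A = edgesIn G A := by
  rw [edgesIn, edgesIn, edgeFinset_delOne, Finset.filter_erase, Finset.erase_eq_of_notMem]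
  intro hmem
  exact hy ((mem_filter.mp hmem).2 y (by simp))

/-- bridging lemma stated abstractly so the instances match those in `bipScore`. -/
lemma bip_pos (G : SimpleGraph V) (A B : Finset V) (hB : ∀ v, v ∈ B ↔ v ∉ A)
    (E1 E2 v1 v2 m : ℕ) (hE1 : edgesIn G A = E1) (hE2 : edgesIn G B = E2)
    (hv1 : vol G A = v1) (hv2 : vol G B = v2) (hm : numEdges G = m)
    (hpos : 0 < ((E1 : ℝ) + (E2 : ℝ)) / (m : ℝ)
      - ((v1 : ℝ) ^ 2 + (v2 : ℝ) ^ 2) / (4 * (m : ℝ) ^ 2)) :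
    0 < bipScore G A := by
  have hBc : B = Aᶜ := by
    ext v
    rw [Finset.mem_compl]
    exact hB v
  subst hBc
  rw [bipScore, hE1, hE2, hv1, hv2, hm]
  exact hpos

lemma bipScore_le_modularity (G : SimpleGraph V) (A B : Finset V)
    (hB : ∀ v, v ∈ B ↔ v ∉ A) (hA : A.Nonempty) (hBne : B.Nonempty) :
    bipScore G A ≤ modularity G := by
  have hBc : B = Aᶜ := by
    ext v
    rw [Finset.mem_compl]
    exact hB v
  subst hBc
  have hAne : A ≠ Aᶜ := by
    intro h
    obtain ⟨u, hu⟩ := hA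
    exact (Finset.mem_compl.mp (h ▸ hu)) hu
  let P : Finpartition (univ : Finset V) :=
    { parts := {A, Aᶜ}
      supIndep := by
        rw [Finset.supIndep_pair hAne]
        exact disjoint_compl_right
      sup_parts := by
        simp [sup_eq_union]
      bot_notMem := by
        simp only [mem_insert, mem_singleton, bot_eq_empty]
        push_neg
        obtain ⟨u, hu⟩ := hA
        obtain ⟨w, hw⟩ := hBne
        exact ⟨fun h => absurd (h ▸ hu) (notMem_empty u), fun h => absurd (h ▸ hw) (notMem_empty w)⟩ }
  have hparts : P.parts = {A, Aᶜ} := rfl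
  have h1 : modScore G P = bipScore G A := by
    rw [modScore, bipScore, hparts, Finset.sum_pair hAne, Finset.sum_pair hAne]
  rw [← h1, modularity]
  exact le_ciSup (Set.Finite.bddAbove (Set.finite_range _)) P

end DelOne

lemma key_ineq (L a b : ℕ) (hl : 2 ≤ L) (ha : 1 ≤ a) (hb : 1 ≤ b) :
    0 < ((↑(a * b) : ℝ) + ↑((L * a - a) * (L * b - b))) / ↑(L * a * (L * b) - 1)
      - ((↑(a * (L * b) + b * (L * a) - 1) : ℝ) ^ 2
          + (↑((L * a - a) * (L * b) + (L * b - b) * (L * a) - 1) : ℝ) ^ 2)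
        / (4 * (↑(L * a * (L * b) - 1) : ℝ) ^ 2) := by
  have hLa : (L - 1) * a = L * a - a := by rw [Nat.sub_mul, one_mul]
  have hLb : (L - 1) * b = L * b - b := by rw [Nat.sub_mul, one_mul]
  rw [← hLa, ← hLb]
  have p1 : 0 < L * a := Nat.mul_pos (by omega) (by omega)
  have p2 : 0 < L * b := Nat.mul_pos (by omega) (by omega)
  have e3 : 1 ≤ L * a * (L * b) := Nat.mul_pos p1 p2
  have e4 : 1 ≤ a * (L * b) + b * (L * a) := by
    have := Nat.mul_pos (show 0 < a by omega) p2; omega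
  have e5 : 1 ≤ (L - 1) * a * (L * b) + (L - 1) * b * (L * a) := by
    have := Nat.mul_pos (Nat.mul_pos (show 0 < L - 1 by omega) (show 0 < a by omega)) p2
    omega
  push_cast [Nat.cast_sub e3, Nat.cast_sub e4, Nat.cast_sub e5,
    Nat.cast_sub (show 1 ≤ L by omega)]
  have hL : (2 : ℝ) ≤ L := by exact_mod_cast hl
  have ha' : (1 : ℝ) ≤ a := by exact_mod_cast ha
  have hb' : (1 : ℝ) ≤ b := by exact_mod_cast hb
  have h1 : (2 : ℝ) ≤ L * a := by nlinarith
  have h2 : (2 : ℝ) ≤ L * b := by nlinarith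
  have hm : (0 : ℝ) < (L : ℝ) * a * (L * b) - 1 := by
    nlinarith [mul_le_mul h1 h2 (by norm_num) (by linarith)]
  have h3 : (1 : ℝ) ≤ ((L : ℝ) - 1) * a := by nlinarith
  have h4 : (1 : ℝ) ≤ ((L : ℝ) - 1) * a * b := by
    nlinarith [mul_le_mul h3 hb' (by norm_num) (by linarith)]
  have h5 : (0 : ℝ) < 8 * ((L : ℝ) - 1) * a * b - 2 := by nlinarith
  rw [sub_pos, div_lt_div_iff₀ (by positivity) hm]
  nlinarith [mul_pos hm h5, mul_pos hm hm]

theorem stmt10 (s t ℓ : ℕ) (hs : 2 ≤ s) (hst : s ≤ t) (hl : 2 ≤ ℓ)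
    (hls : ℓ ∣ s) (hlt : ℓ ∣ t)
    (A : Finset (Fin s ⊕ Fin t))
    (hAS : (A.filter (fun v => v.isLeft)).card = s / ℓ)
    (hAT : (A.filter (fun v => v.isRight)).card = t / ℓ)
    (x y : Fin s ⊕ Fin t) (hx : x ∈ A) (hy : y ∉ A)
    (hxy : (completeBipartiteGraph (Fin s) (Fin t)).Adj x y) :
    0 < bipScore ((completeBipartiteGraph (Fin s) (Fin t)).deleteEdges {s(x, y)}) A ∧
      0 < modularity ((completeBipartiteGraph (Fin s) (Fin t)).deleteEdges {s(x, y)}) := by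
  obtain ⟨a, rfl⟩ := hls
  obtain ⟨b, rfl⟩ := hlt
  have hl0 : 0 < ℓ := by omega
  rw [Nat.mul_div_cancel_left a hl0] at hAS
  rw [Nat.mul_div_cancel_left b hl0] at hAT
  have ha : 1 ≤ a := by
    rcases Nat.eq_zero_or_pos a with h | h
    · subst h; omega
    · omega
  have hb : 1 ≤ b := by
    rcases Nat.eq_zero_or_pos b with h | h
    · subst h; omega
    · omega
  have hxA : x ∉ Aᶜ := by simp [hx]
  have hyA : y ∈ Aᶜ := by simp [hy]
  have hBiff : ∀ v, v ∈ Aᶜ ↔ v ∉ A := fun v => Finset.mem_compl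
  -- complement counts
  have hsplitL : (A.filter (fun v => v.isLeft)).card + (Aᶜ.filter (fun v => v.isLeft)).card
      = ℓ * a := by
    rw [← card_union_of_disjoint (disjoint_filter_filter disjoint_compl_right),
      ← filter_union, union_compl]
    have h := card_left (s := ℓ * a) (t := ℓ * b) (univ : Finset (Fin (ℓ * a) ⊕ Fin (ℓ * b)))
    simp only [mem_univ, filter_true] at h
    rw [← h, card_univ, Fintype.card_fin]
  have hsplitR : (A.filter (fun v => v.isRight)).card + (Aᶜ.filter (fun v => v.isRight)).card
      = ℓ * b := by
    rw [← card_union_of_disjoint (disjoint_filter_filter disjoint_compl_right),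
      ← filter_union, union_compl]
    have h := card_right (s := ℓ * a) (t := ℓ * b) (univ : Finset (Fin (ℓ * a) ⊕ Fin (ℓ * b)))
    simp only [mem_univ, filter_true] at h
    rw [← h, card_univ, Fintype.card_fin]
  have hAcS : (Aᶜ.filter (fun v => v.isLeft)).card = ℓ * a - a := by omega
  have hAcT : (Aᶜ.filter (fun v => v.isRight)).card = ℓ * b - b := by omega
  -- the six quantities
  have hnum : numEdges ((completeBipartiteGraph (Fin (ℓ * a)) (Fin (ℓ * b))).deleteEdges
      {s(x, y)}) = ℓ * a * (ℓ * b) - 1 := by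
    rw [numEdges, edgeFinset_delOne, card_erase_of_mem (by
      simp only [SimpleGraph.mem_edgeFinset, SimpleGraph.mem_edgeSet]; exact hxy)]
    have h := numEdges_Kst (s := ℓ * a) (t := ℓ * b)
    rw [numEdges] at h
    rw [h]
  have hE1 : edgesIn ((completeBipartiteGraph (Fin (ℓ * a)) (Fin (ℓ * b))).deleteEdges
      {s(x, y)}) A = a * b := by
    rw [edgesIn_delOne _ x y A hy, edgesIn_Kst, hAS, hAT]
  have hE2 : edgesIn ((completeBipartiteGraph (Fin (ℓ * a)) (Fin (ℓ * b))).deleteEdges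
      {s(x, y)}) Aᶜ = (ℓ * a - a) * (ℓ * b - b) := by
    rw [show s(x, y) = s(y, x) from Sym2.eq_swap, edgesIn_delOne _ y x Aᶜ hxA,
      edgesIn_Kst, hAcS, hAcT]
  have hv1 : vol ((completeBipartiteGraph (Fin (ℓ * a)) (Fin (ℓ * b))).deleteEdges
      {s(x, y)}) A = a * (ℓ * b) + b * (ℓ * a) - 1 := by
    rw [vol_delOne _ x y hxy A hx hy, vol_Kst, hAS, hAT]
  have hv2 : vol ((completeBipartiteGraph (Fin (ℓ * a)) (Fin (ℓ * b))).deleteEdges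
      {s(x, y)}) Aᶜ = (ℓ * a - a) * (ℓ * b) + (ℓ * b - b) * (ℓ * a) - 1 := by
    rw [show s(x, y) = s(y, x) from Sym2.eq_swap, vol_delOne _ y x hxy.symm Aᶜ hyA hxA,
      vol_Kst, hAcS, hAcT]
  have hbip : 0 < bipScore ((completeBipartiteGraph (Fin (ℓ * a)) (Fin (ℓ * b))).deleteEdges
      {s(x, y)}) A :=
    bip_pos _ A Aᶜ hBiff _ _ _ _ _ hE1 hE2 hv1 hv2 hnum (key_ineq ℓ a b hl ha hb)
  exact ⟨hbip, lt_of_lt_of_le hbip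
    (bipScore_le_modularity _ A Aᶜ hBiff ⟨x, hx⟩ ⟨y, hyA⟩)⟩
end
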